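/- arXiv:2005.14492 — 5 statements merged into one kernel-verified Lean document; each statement's English description precedes it below -/
import Mathlib

section
/- A function θ : S → T between inverse semigroups is a prehomomorphism if and only if it preserves the restricted product (if x⁻¹x = yy⁻¹ then θ(x)⁻¹θ(x) = θ(y)θ(y)⁻¹ and θ(xy) = θ(x)θ(y)) and preserves the natural partial order. -/
/-! The forward direction rests on two consequences of `θ (s * t) ≤ θ s * θ t`: idempotents map to
idempotents, and `θ s = θ (s * s⁻¹ * s) ≤ θ s * θ s⁻¹ * θ s` (and symmetrically) force
`θ s⁻¹ = (θ s)⁻¹`, because `a ≤ a * x` already implies `a * x = a`. Writing `x = (x * y) * y⁻¹` and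
`y = x⁻¹ * (x * y)` then squeezes `θ (x * y)` against `θ x * θ y` for a restricted product.
Conversely, every product `s * t` is the restricted product of `s * (t * t⁻¹) ≤ s` and
`(s⁻¹ * s) * t ≤ t`, so monotonicity gives `θ (s * t) ≤ θ s * θ t`. -/

/-- An inverse semigroup: a semigroup with an involution-like inverse such that
`a * a⁻¹ * a = a`, `a⁻¹ * a * a⁻¹ = a⁻¹`, and idempotents commute. -/
class InverseSemigroup (S : Type*) extends Semigroup S, Inv S where
  mul_inv_mul : ∀ a : S, a * a⁻¹ * a = a
  inv_mul_inv : ∀ a : S, a⁻¹ * a * a⁻¹ = a⁻¹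
  idem_comm : ∀ e f : S, e * e = e → f * f = f → e * f = f * e

/-- The natural partial order on an inverse semigroup: `a ≤ b` iff `a = b * e`
for some idempotent `e`. -/
def natLe {S : Type*} [InverseSemigroup S] (a b : S) : Prop :=
  ∃ e : S, e * e = e ∧ a = b * e

/-- A prehomomorphism between inverse semigroups. -/
def IsPrehom {S T : Type*} [InverseSemigroup S] [InverseSemigroup T] (θ : S → T) : Prop :=
  ∀ s t : S, natLe (θ (s * t)) (θ s * θ t)

namespace InverseSemigroup

variable {S : Type*} [InverseSemigroup S]

lemma isIdempotentElem_mul_inv (a : S) : IsIdempotentElem (a * a⁻¹) :=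
  calc a * a⁻¹ * (a * a⁻¹) = a * a⁻¹ * a * a⁻¹ := by simp only [mul_assoc]
    _ = a * a⁻¹ := by rw [mul_inv_mul]

lemma isIdempotentElem_inv_mul (a : S) : IsIdempotentElem (a⁻¹ * a) :=
  calc a⁻¹ * a * (a⁻¹ * a) = a⁻¹ * a * a⁻¹ * a := by simp only [mul_assoc]
    _ = a⁻¹ * a := by rw [inv_mul_inv]

lemma eq_inv_of_mul_mul {a x : S} (h₁ : a * x * a = a) (h₂ : x * a * x = x) : x = a⁻¹ := by
  have hxa : IsIdempotentElem (x * a) := by rw [IsIdempotentElem, ← mul_assoc, h₂]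
  have hax : IsIdempotentElem (a * x) := by rw [IsIdempotentElem, ← mul_assoc, h₁]
  calc x = x * (a * a⁻¹ * a) * x := by rw [mul_inv_mul, h₂]
    _ = x * a * (a⁻¹ * a) * x := by simp only [mul_assoc]
    _ = a⁻¹ * a * (x * a) * x := by rw [idem_comm _ _ hxa (isIdempotentElem_inv_mul a)]
    _ = a⁻¹ * (a * x * a) * x := by simp only [mul_assoc]
    _ = (a⁻¹ * a * a⁻¹) * (a * x) := by rw [h₁, inv_mul_inv, mul_assoc]
    _ = a⁻¹ * (a * a⁻¹ * (a * x)) := by simp only [mul_assoc]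
    _ = a⁻¹ * (a * x * (a * a⁻¹)) := by rw [idem_comm _ _ (isIdempotentElem_mul_inv a) hax]
    _ = a⁻¹ * (a * x * a) * a⁻¹ := by simp only [mul_assoc]
    _ = a⁻¹ := by rw [h₁, inv_mul_inv]

lemma inv_eq_self_of_isIdempotentElem {e : S} (he : IsIdempotentElem e) : e⁻¹ = e := by
  have h : e * e * e = e := by rw [he.eq, he.eq]
  exact (eq_inv_of_mul_mul h h).symm

lemma mul_inv_rev (a b : S) : (a * b)⁻¹ = b⁻¹ * a⁻¹ := by
  have hcomm := idem_comm _ _ (isIdempotentElem_mul_inv b) (isIdempotentElem_inv_mul a)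
  refine (eq_inv_of_mul_mul ?_ ?_).symm
  · calc a * b * (b⁻¹ * a⁻¹) * (a * b) = a * (b * b⁻¹ * (a⁻¹ * a)) * b := by
          simp only [mul_assoc]
      _ = (a * a⁻¹ * a) * (b * b⁻¹ * b) := by rw [hcomm]; simp only [mul_assoc]
      _ = a * b := by rw [mul_inv_mul, mul_inv_mul]
  · calc b⁻¹ * a⁻¹ * (a * b) * (b⁻¹ * a⁻¹) = b⁻¹ * (a⁻¹ * a * (b * b⁻¹)) * a⁻¹ := by
          simp only [mul_assoc]
      _ = (b⁻¹ * b * b⁻¹) * (a⁻¹ * a * a⁻¹) := by rw [← hcomm]; simp only [mul_assoc]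
      _ = b⁻¹ * a⁻¹ := by rw [inv_mul_inv, inv_mul_inv]

lemma isIdempotentElem_inv_mul_mul {e : S} (he : IsIdempotentElem e) (c : S) :
    IsIdempotentElem (c⁻¹ * e * c) :=
  calc c⁻¹ * e * c * (c⁻¹ * e * c) = c⁻¹ * (e * (c * c⁻¹)) * (e * c) := by simp only [mul_assoc]
    _ = (c⁻¹ * c * c⁻¹) * (e * e) * c := by
        rw [idem_comm _ _ he (isIdempotentElem_mul_inv c)]; simp only [mul_assoc]
    _ = c⁻¹ * e * c := by rw [inv_mul_inv, he.eq]

lemma mul_eq_mul_inv_mul_mul {e : S} (he : IsIdempotentElem e) (c : S) :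
    e * c = c * (c⁻¹ * e * c) :=
  calc e * c = e * (c * c⁻¹) * c := by rw [mul_assoc e, mul_inv_mul]
    _ = c * (c⁻¹ * e * c) := by
        rw [idem_comm _ _ he (isIdempotentElem_mul_inv c)]; simp only [mul_assoc]

end InverseSemigroup

open InverseSemigroup

section NaturalOrder

variable {S : Type*} [InverseSemigroup S]

lemma natLe_of_mul_eq {a b e : S} (he : IsIdempotentElem e) (h : b * e = a) : natLe a b :=
  ⟨e, he, h.symm⟩

lemma mul_natLe_of_isIdempotentElem {e : S} (he : IsIdempotentElem e) (t : S) : natLe (t * e) t :=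
  natLe_of_mul_eq he rfl

lemma isIdempotentElem_mul_natLe {e : S} (he : IsIdempotentElem e) (t : S) : natLe (e * t) t :=
  natLe_of_mul_eq (isIdempotentElem_inv_mul_mul he t) (mul_eq_mul_inv_mul_mul he t).symm

lemma natLe.trans {a b c : S} (hab : natLe a b) (hbc : natLe b c) : natLe a c := by
  obtain ⟨f, hf, rfl⟩ := hab
  obtain ⟨e, he, rfl⟩ := hbc
  exact natLe_of_mul_eq (IsIdempotentElem.mul_of_commute (idem_comm e f he hf) he hf)
    (mul_assoc c e f).symm

lemma natLe.mul_left {a b : S} (h : natLe a b) (c : S) : natLe (c * a) (c * b) := by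
  obtain ⟨e, he, rfl⟩ := h
  exact natLe_of_mul_eq he (mul_assoc c b e)

lemma natLe.mul_right {a b : S} (h : natLe a b) (c : S) : natLe (a * c) (b * c) := by
  obtain ⟨e, he, rfl⟩ := h
  refine natLe_of_mul_eq (isIdempotentElem_inv_mul_mul he c) ?_
  rw [mul_assoc b e c, mul_eq_mul_inv_mul_mul he c, mul_assoc b c]

lemma natLe.eq_mul_inv_mul_self {a b : S} (h : natLe a b) : a = b * (a⁻¹ * a) := by
  obtain ⟨e, he, rfl⟩ := h
  rw [InverseSemigroup.mul_inv_rev, inv_eq_self_of_isIdempotentElem he]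
  calc b * e = (b * b⁻¹ * b) * (e * e) := by rw [mul_inv_mul, he]
    _ = b * (b⁻¹ * b * e) * e := by simp only [mul_assoc]
    _ = b * (e * (b⁻¹ * b)) * e := by rw [idem_comm _ _ (isIdempotentElem_inv_mul b) he]
    _ = b * (e * b⁻¹ * (b * e)) := by simp only [mul_assoc]

lemma natLe.eq_mul_inv_self_mul {a b : S} (h : natLe a b) : a = a * a⁻¹ * b := by
  obtain ⟨e, he, rfl⟩ := h
  rw [InverseSemigroup.mul_inv_rev, inv_eq_self_of_isIdempotentElem he]
  calc b * e = (b * b⁻¹ * b) * e := by rw [mul_inv_mul]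
    _ = b * (b⁻¹ * b * e) := by simp only [mul_assoc]
    _ = b * (e * e * (b⁻¹ * b)) := by rw [idem_comm _ _ (isIdempotentElem_inv_mul b) he, he]
    _ = b * e * (e * b⁻¹) * b := by simp only [mul_assoc]

lemma natLe.antisymm {a b : S} (hab : natLe a b) (hba : natLe b a) : a = b :=
  calc a = b * (a⁻¹ * a) := hab.eq_mul_inv_mul_self
    _ = (b * b⁻¹ * b) * (a⁻¹ * a) := by rw [mul_inv_mul]
    _ = b * b⁻¹ * (b * (a⁻¹ * a)) := by simp only [mul_assoc]
    _ = b * b⁻¹ * a := by rw [← hab.eq_mul_inv_mul_self]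
    _ = b := hba.eq_mul_inv_self_mul.symm

lemma mul_right_eq_self_of_natLe {a x : S} (h : natLe a (a * x)) : a * x = a :=
  calc a * x = (a * a⁻¹ * a) * x := by rw [mul_inv_mul]
    _ = a * a⁻¹ * (a * x) := by simp only [mul_assoc]
    _ = a := h.eq_mul_inv_self_mul.symm

lemma mul_left_eq_self_of_natLe {a x : S} (h : natLe a (x * a)) : x * a = a :=
  calc x * a = x * (a * a⁻¹ * a) := by rw [mul_inv_mul]
    _ = x * a * (a⁻¹ * a) := by simp only [mul_assoc]
    _ = a := h.eq_mul_inv_mul_self.symm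

end NaturalOrder

namespace IsPrehom

variable {S T : Type*} [InverseSemigroup S] [InverseSemigroup T] {θ : S → T}

lemma map_isIdempotentElem (hθ : IsPrehom θ) {e : S} (he : IsIdempotentElem e) :
    IsIdempotentElem (θ e) := by
  have h := hθ e e
  rw [he.eq] at h
  exact mul_right_eq_self_of_natLe h

lemma map_inv (hθ : IsPrehom θ) (s : S) : θ s⁻¹ = (θ s)⁻¹ := by
  have hs : natLe (θ s) (θ s * (θ s⁻¹ * θ s)) := by
    have h := (hθ (s * s⁻¹) s).trans ((hθ s s⁻¹).mul_right (θ s))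
    rwa [mul_inv_mul, mul_assoc] at h
  have hs' : natLe (θ s⁻¹) (θ s⁻¹ * (θ s * θ s⁻¹)) := by
    have h := (hθ (s⁻¹ * s) s⁻¹).trans ((hθ s⁻¹ s).mul_right (θ s⁻¹))
    rwa [inv_mul_inv, mul_assoc] at h
  refine eq_inv_of_mul_mul ?_ ?_
  · rw [mul_assoc, mul_right_eq_self_of_natLe hs]
  · rw [mul_assoc, mul_right_eq_self_of_natLe hs']

lemma monotone (hθ : IsPrehom θ) {a b : S} (h : natLe a b) : natLe (θ a) (θ b) := by
  obtain ⟨e, he, rfl⟩ := h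
  exact (hθ b e).trans (mul_natLe_of_isIdempotentElem (hθ.map_isIdempotentElem he) (θ b))

lemma map_restricted_mul (hθ : IsPrehom θ) {x y : S} (hxy : x⁻¹ * x = y * y⁻¹) :
    (θ x)⁻¹ * θ x = θ y * (θ y)⁻¹ ∧ θ (x * y) = θ x * θ y := by
  have hx : natLe (θ x) (θ (x * y) * (θ y)⁻¹) := by
    have h := hθ (x * y) y⁻¹
    rwa [mul_assoc, ← hxy, ← mul_assoc, mul_inv_mul, hθ.map_inv] at h
  have hy : natLe (θ y) ((θ x)⁻¹ * θ (x * y)) := by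
    have h := hθ x⁻¹ (x * y)
    rwa [← mul_assoc, hxy, mul_inv_mul, hθ.map_inv] at h
  have hxy_le : natLe (θ (x * y)) (θ x * θ y) := hθ x y
  have hx_eq : θ x * (θ y * (θ y)⁻¹) = θ x := by
    refine mul_right_eq_self_of_natLe (hx.trans ?_)
    rw [← mul_assoc]
    exact hxy_le.mul_right _
  have hy_eq : (θ x)⁻¹ * θ x * θ y = θ y := by
    refine mul_left_eq_self_of_natLe (hy.trans ?_)
    rw [mul_assoc]
    exact hxy_le.mul_left _
  refine ⟨?_, hxy_le.antisymm ?_⟩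
  · calc (θ x)⁻¹ * θ x = (θ x)⁻¹ * θ x * θ y * (θ y)⁻¹ := by
          rw [mul_assoc ((θ x)⁻¹ * θ x), mul_assoc, hx_eq]
      _ = θ y * (θ y)⁻¹ := by rw [hy_eq]
  · have h := hx.mul_right (θ y)
    rw [mul_assoc] at h
    exact h.trans (mul_natLe_of_isIdempotentElem (isIdempotentElem_inv_mul _) _)

end IsPrehom

lemma isPrehom_of_map_restricted_mul {S T : Type*} [InverseSemigroup S] [InverseSemigroup T]
    {θ : S → T} (hres : ∀ x y : S, x⁻¹ * x = y * y⁻¹ → θ (x * y) = θ x * θ y)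
    (hmono : ∀ a b : S, natLe a b → natLe (θ a) (θ b)) : IsPrehom θ := by
  intro s t
  have hf := isIdempotentElem_inv_mul s
  have hg := isIdempotentElem_mul_inv t
  have hcomm : t * t⁻¹ * (s⁻¹ * s) = s⁻¹ * s * (t * t⁻¹) := idem_comm _ _ hg hf
  have hdom : (s * (t * t⁻¹))⁻¹ * (s * (t * t⁻¹)) = s⁻¹ * s * (t * t⁻¹) :=
    calc (s * (t * t⁻¹))⁻¹ * (s * (t * t⁻¹)) = t * t⁻¹ * (s⁻¹ * s) * (t * t⁻¹) := by
          rw [InverseSemigroup.mul_inv_rev, inv_eq_self_of_isIdempotentElem hg]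
          simp only [mul_assoc]
      _ = s⁻¹ * s * ((t * t⁻¹) * (t * t⁻¹)) := by rw [hcomm, mul_assoc (s⁻¹ * s)]
      _ = s⁻¹ * s * (t * t⁻¹) := by rw [hg.eq]
  have hran : s⁻¹ * s * t * (s⁻¹ * s * t)⁻¹ = s⁻¹ * s * (t * t⁻¹) :=
    calc s⁻¹ * s * t * (s⁻¹ * s * t)⁻¹ = s⁻¹ * s * (t * t⁻¹ * (s⁻¹ * s)) := by
          rw [InverseSemigroup.mul_inv_rev, inv_eq_self_of_isIdempotentElem hf]
          simp only [mul_assoc]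
      _ = (s⁻¹ * s) * (s⁻¹ * s) * (t * t⁻¹) := by rw [hcomm]; simp only [mul_assoc]
      _ = s⁻¹ * s * (t * t⁻¹) := by rw [hf.eq]
  have hprod : s * (t * t⁻¹) * (s⁻¹ * s * t) = s * t :=
    calc s * (t * t⁻¹) * (s⁻¹ * s * t) = s * (t * t⁻¹ * (s⁻¹ * s)) * t := by
          simp only [mul_assoc]
      _ = (s * s⁻¹ * s) * (t * t⁻¹ * t) := by rw [hcomm]; simp only [mul_assoc]
      _ = s * t := by rw [mul_inv_mul, mul_inv_mul]
  rw [← hprod, hres _ _ (hdom.trans hran.symm)]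
  exact ((hmono _ _ (mul_natLe_of_isIdempotentElem hg s)).mul_right _).trans
    ((hmono _ _ (isIdempotentElem_mul_natLe hf t)).mul_left _)

theorem stmt5 {S T : Type*} [InverseSemigroup S] [InverseSemigroup T] (θ : S → T) :
    IsPrehom θ ↔
      ((∀ x y : S, x⁻¹ * x = y * y⁻¹ →
          (θ x)⁻¹ * θ x = θ y * (θ y)⁻¹ ∧ θ (x * y) = θ x * θ y) ∧
       (∀ a b : S, natLe a b → natLe (θ a) (θ b))) :=
  ⟨fun hθ => ⟨fun _ _ hxy => hθ.map_restricted_mul hxy, fun _ _ => hθ.monotone⟩,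
    fun ⟨hres, hmono⟩ => isPrehom_of_map_restricted_mul (fun x y hxy => (hres x y hxy).2) hmono⟩
end

section
/- In an ordered groupoid, if z ≤ xy where the composite xy exists, then there exist x' ≤ x and y' ≤ y such that the composite x'y' exists and z = x'y'. -/
/-- An algebraic groupoid: a type with an everywhere-defined multiplication which is
only required to behave well on composable pairs (`d x = r y`), together with
inversion and domain/range maps (valued in the identities of the groupoid). -/
class Groupoid' (G : Type*) where
  mul : G → G → G
  inv : G → G
  d : G → G
  r : G → G
  r_d : ∀ x : G, r (d x) = d x
  d_r : ∀ x : G, d (r x) = r x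
  mul_assoc : ∀ x y z : G, d x = r y → d y = r z → mul (mul x y) z = mul x (mul y z)
  d_mul : ∀ x y : G, d x = r y → d (mul x y) = d y
  r_mul : ∀ x y : G, d x = r y → r (mul x y) = r x
  mul_d : ∀ x : G, mul x (d x) = x
  r_mul_cancel : ∀ x : G, mul (r x) x = x
  mul_inv : ∀ x : G, mul x (inv x) = r x
  inv_mul : ∀ x : G, mul (inv x) x = d x
  d_inv : ∀ x : G, d (inv x) = r x
  r_inv : ∀ x : G, r (inv x) = d x

open Groupoid'

/-- An element is an identity of the groupoid if it is its own domain. -/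
def IsId {G : Type*} [Groupoid' G] (e : G) : Prop := d e = e

/-- An ordered groupoid: axioms (OG1), (OG2) and (OG3) (restriction exists uniquely). -/
class OrderedGroupoid (G : Type*) [Groupoid' G] [PartialOrder G] : Prop where
  og1 : ∀ x y : G, x ≤ y → inv x ≤ inv y
  og2 : ∀ x y u v : G, x ≤ y → u ≤ v → d x = r u → d y = r v → mul x u ≤ mul y v
  og3 : ∀ x e : G, IsId e → e ≤ d x → ∃! z : G, z ≤ x ∧ d z = e

/-!
Let `w ≤ x⁻¹` be the restriction of `x⁻¹` to the identity `r z ≤ r (x y) = r x`.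
Then `x' = w⁻¹ ≤ x`, and `y' = w z ≤ x⁻¹ (x y) = y` by (OG2); finally `w⁻¹ (w z) = r z · z = z`.
-/

namespace Groupoid'

variable {G : Type*} [Groupoid' G]

theorem isId_r (a : G) : IsId (r a) := d_r a

theorem inv_mul_cancel_left {a b : G} (h : d a = r b) : mul (inv a) (mul a b) = b := by
  rw [← Groupoid'.mul_assoc (inv a) a b (d_inv a) h, inv_mul, h, r_mul_cancel]

theorem inv_inv (a : G) : inv (inv a) = a := by
  have h := inv_mul_cancel_left (d_inv a)
  rwa [inv_mul, ← r_inv a, ← d_inv (inv a), mul_d] at h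

section Ordered

variable [PartialOrder G] [OrderedGroupoid G]

theorem inv_le_of_le_inv {a b : G} (h : a ≤ inv b) : inv a ≤ b := by
  simpa only [Groupoid'.inv_inv] using OrderedGroupoid.og1 _ _ h

theorem r_le_r {a b : G} (h : a ≤ b) : r a ≤ r b := by
  have h' := OrderedGroupoid.og2 a b (inv a) (inv b) h (OrderedGroupoid.og1 _ _ h)
    (r_inv a).symm (r_inv b).symm
  rwa [Groupoid'.mul_inv, Groupoid'.mul_inv] at h'

end Ordered

end Groupoid'

theorem stmt9 {G : Type*} [Groupoid' G] [PartialOrder G] [OrderedGroupoid G]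
    (x y z : G) (hxy : d x = r y) (hz : z ≤ mul x y) :
    ∃ x' y' : G, x' ≤ x ∧ y' ≤ y ∧ d x' = r y' ∧ z = mul x' y' := by
  have hrz : r z ≤ d (inv x) := by
    rw [d_inv, ← r_mul x y hxy]
    exact r_le_r hz
  obtain ⟨w, hwx, hwd⟩ := (OrderedGroupoid.og3 (inv x) (r z) (isId_r z) hrz).exists
  refine ⟨inv w, mul w z, inv_le_of_le_inv hwx, ?_, ?_, (inv_mul_cancel_left hwd).symm⟩
  · have h := OrderedGroupoid.og2 w (inv x) z (mul x y) hwx hz hwd (by rw [d_inv, r_mul x y hxy])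
    rwa [inv_mul_cancel_left hxy] at h
  · rw [d_inv, r_mul w z hwd]
end

section
/- Let G be a groupoid with a partial order ≤. Then G is an ordered groupoid (satisfies (OG1),(OG2),(OG3)) if and only if it satisfies (OG1), (OG2), (OI): the identities form an order ideal, and (OG4): for each x and identity e ≤ d(x) there exists y ≤ x with d(y) = e. -/
open Groupoid'

/-! In an ordered groupoid the order is compatible with `d`, since `d x = x⁻¹ x`.
Given (OI), two restrictions `z, z' ≤ x` with the same domain satisfy `z' z⁻¹ ≤ x x⁻¹ = r x`,
so `z' z⁻¹` is an identity, namely `r z`, and hence `z' = z`. Conversely, given (OG3) and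
`x ≤ e` with `e` an identity, both `x` and `d x` are restrictions of `e` to `d x`, so
`x = d x`. -/

namespace Groupoid'

variable {G : Type*} [Groupoid' G]

theorem isId_d (x : G) : IsId (d x) := by
  unfold IsId
  rw [← r_d x, d_r]

theorem eq_of_mul_inv_eq_r {z z' : G} (hd : d z' = d z) (h : mul z' (inv z) = r z) : z' = z := by
  have hcomp : d z' = r (inv z) := by rw [r_inv, hd]
  calc z' = mul z' (d z') := (mul_d z').symm
    _ = mul z' (mul (inv z) z) := by rw [inv_mul, hd]
    _ = mul (mul z' (inv z)) z := (mul_assoc _ _ _ hcomp (d_inv z)).symm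
    _ = z := by rw [h, r_mul_cancel]

variable [PartialOrder G]

theorem d_le_d (og1 : ∀ x y : G, x ≤ y → inv x ≤ inv y)
    (og2 : ∀ x y u v : G, x ≤ y → u ≤ v → d x = r u → d y = r v → mul x u ≤ mul y v)
    {x y : G} (hle : x ≤ y) : d x ≤ d y := by
  have h := og2 _ _ _ _ (og1 x y hle) hle (d_inv x) (d_inv y)
  rwa [inv_mul, inv_mul] at h

theorem isId_of_le_isId (og1 : ∀ x y : G, x ≤ y → inv x ≤ inv y)
    (og2 : ∀ x y u v : G, x ≤ y → u ≤ v → d x = r u → d y = r v → mul x u ≤ mul y v)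
    (og3 : ∀ x e : G, IsId e → e ≤ d x → ∃! z : G, z ≤ x ∧ d z = e)
    {x e : G} (he : IsId e) (hle : x ≤ e) : IsId x := by
  have hd : d x ≤ d e := d_le_d og1 og2 hle
  have hde : d x ≤ e := he ▸ hd
  exact ((og3 e (d x) (isId_d x) hd).unique ⟨hle, rfl⟩ ⟨hde, isId_d x⟩).symm

theorem eq_of_le_of_d_eq (og1 : ∀ x y : G, x ≤ y → inv x ≤ inv y)
    (og2 : ∀ x y u v : G, x ≤ y → u ≤ v → d x = r u → d y = r v → mul x u ≤ mul y v)
    (oi : ∀ x e : G, IsId e → x ≤ e → IsId x)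
    {x z z' : G} (hz : z ≤ x) (hz' : z' ≤ x) (hd : d z' = d z) : z' = z := by
  have hcomp : d z' = r (inv z) := by rw [r_inv, hd]
  have hle : mul z' (inv z) ≤ r x :=
    mul_inv x ▸ og2 _ _ _ _ hz' (og1 z x hz) hcomp (r_inv x).symm
  have hid : IsId (mul z' (inv z)) := oi _ _ (d_r x) hle
  exact eq_of_mul_inv_eq_r hd (by rw [← hid, d_mul _ _ hcomp, d_inv])

end Groupoid'

theorem stmt13 {G : Type*} [Groupoid' G] [PartialOrder G] :
    ((∀ x y : G, x ≤ y → inv x ≤ inv y) ∧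
     (∀ x y u v : G, x ≤ y → u ≤ v → d x = r u → d y = r v → mul x u ≤ mul y v) ∧
     (∀ x e : G, IsId e → e ≤ d x → ∃! z : G, z ≤ x ∧ d z = e))
    ↔
    ((∀ x y : G, x ≤ y → inv x ≤ inv y) ∧
     (∀ x y u v : G, x ≤ y → u ≤ v → d x = r u → d y = r v → mul x u ≤ mul y v) ∧
     (∀ x e : G, IsId e → x ≤ e → IsId x) ∧
     (∀ x e : G, IsId e → e ≤ d x → ∃ z : G, z ≤ x ∧ d z = e)) := by
  constructor
  · rintro ⟨og1, og2, og3⟩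
    exact ⟨og1, og2, fun _ _ he hle => isId_of_le_isId og1 og2 og3 he hle,
      fun x e he hle => (og3 x e he hle).exists⟩
  · rintro ⟨og1, og2, oi, og4⟩
    refine ⟨og1, og2, fun x e he hle => ?_⟩
    obtain ⟨z, hz, hdz⟩ := og4 x e he hle
    exact ⟨z, ⟨hz, hdz⟩, fun _ ⟨hz', hdz'⟩ =>
      eq_of_le_of_d_eq og1 og2 oi hz hz' (hdz'.trans hdz.symm)⟩
end

section
/- Let G be a group acting on a partially ordered set X by order automorphisms and Y ⊆ X a McAlister triple (G,X,Y): Y is an order ideal of X and a meet-semilattice, G·Y = X, and g·Y ∩ Y ≠ ∅ for all g ∈ G. Then for (e,g),(f,h) ∈ P(G,X,Y) = {(y,g) ∈ Y × G : g⁻¹·y ∈ Y}, the meet e ∧ (g·f) exists in X and (e ∧ g·f, gh) ∈ P(G,X,Y). -/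
variable {G X : Type*}

/-- Membership in `P(G,X,Y)`: pairs `(y,g)` with `y ∈ Y` and `g⁻¹ • y ∈ Y`. -/
def MemP [Group G] [MulAction G X] (Y : Set X) (p : X × G) : Prop :=
  p.1 ∈ Y ∧ p.2⁻¹ • p.1 ∈ Y

def MulAction.toOrderIso [Group G] [PartialOrder X] [MulAction G X]
    (hact : ∀ (g : G) (x y : X), x ≤ y ↔ g • x ≤ g • y) (g : G) : X ≃o X where
  toEquiv := MulAction.toPerm g
  map_rel_iff' := (hact g _ _).symm

theorem isGLB_pair_smul [Group G] [PartialOrder X] [MulAction G X]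
    (hact : ∀ (g : G) (x y : X), x ≤ y ↔ g • x ≤ g • y) (g : G) {a b m : X}
    (hm : IsGLB {a, b} m) : IsGLB {g • a, g • b} (g • m) := by
  have := (MulAction.toOrderIso hact g).isGLB_image'.mpr hm
  rwa [Set.image_pair] at this

theorem IsLowerSet.isGLB_pair [Preorder X] {Y : Set X} (hY : IsLowerSet Y) {a b m : X}
    (ha : a ∈ Y) (hma : m ≤ a) (hmb : m ≤ b)
    (hmax : ∀ c ∈ Y, c ≤ a → c ≤ b → c ≤ m) : IsGLB {a, b} m := by
  refine ⟨by simp [hma, hmb], fun c hc => ?_⟩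
  have hca : c ≤ a := hc (Set.mem_insert a {b})
  exact hmax c (hY hca ha) hca (hc (Set.mem_insert_of_mem a rfl))

theorem stmt17_general [Group G] [PartialOrder X] [MulAction G X]
    (hact : ∀ (g : G) (x y : X), x ≤ y ↔ g • x ≤ g • y)
    (Y : Set X)
    (hMT1a : ∀ x y : X, y ∈ Y → x ≤ y → x ∈ Y)
    (hMT1b : ∀ a ∈ Y, ∀ b ∈ Y, ∃ m ∈ Y, m ≤ a ∧ m ≤ b ∧
        ∀ c ∈ Y, c ≤ a → c ≤ b → c ≤ m)
    (e f : X) (g h : G)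
    (hpe : MemP Y (e, g)) (hpf : MemP Y (f, h)) :
    ∃ m : X, IsGLB {e, g • f} m ∧ MemP Y (m, g * h) := by
  obtain ⟨he, hge⟩ := hpe
  obtain ⟨hf, hhf⟩ := hpf
  have hY : IsLowerSet Y := fun _ _ hle hmem => hMT1a _ _ hmem hle
  -- `e ∧ g • f = g • (g⁻¹ • e ∧ f)`, and the inner meet is taken in `Y`.
  obtain ⟨m, -, hme, hmf, hmax⟩ := hMT1b (g⁻¹ • e) hge f hf
  have hglb := isGLB_pair_smul hact g (hY.isGLB_pair hge hme hmf hmax)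
  rw [smul_inv_smul] at hglb
  refine ⟨g • m, hglb, hY (hglb.1 (Set.mem_insert e _)) he, ?_⟩
  rw [mul_inv_rev, mul_smul, inv_smul_smul]
  exact hY ((hact h⁻¹ _ _).mp hmf) hhf

theorem stmt17 [Group G] [PartialOrder X] [MulAction G X]
    (hact : ∀ (g : G) (x y : X), x ≤ y ↔ g • x ≤ g • y)
    (Y : Set X)
    (hMT1a : ∀ x y : X, y ∈ Y → x ≤ y → x ∈ Y)
    (hMT1b : ∀ a ∈ Y, ∀ b ∈ Y, ∃ m ∈ Y, m ≤ a ∧ m ≤ b ∧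
        ∀ c ∈ Y, c ≤ a → c ≤ b → c ≤ m)
    (hMT2 : ∀ x : X, ∃ (g : G) (y : X), y ∈ Y ∧ x = g • y)
    (hMT3 : ∀ g : G, ∃ y ∈ Y, g • y ∈ Y)
    (e f : X) (g h : G)
    (hpe : MemP Y (e, g)) (hpf : MemP Y (f, h)) :
    ∃ m : X, IsGLB {e, g • f} m ∧ MemP Y (m, g * h) :=
  stmt17_general hact Y hMT1a hMT1b e f g h hpe hpf
end

section
/- Let (G,X,Y) be a McAlister triple. Then P(G,X,Y) = {(y,g) ∈ Y × G : g⁻¹·y ∈ Y} with multiplication (e,g)(f,h) = (e ∧ g·f, gh) is an E-unitary inverse semigroup whose idempotents are {(e,1) : e ∈ Y}. -/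
/-! Since `g • -` is an order automorphism, it carries the meet `e ∧ f` to `g • e ∧ g • f`, so
both bracketings of a triple product `(e,g)(f,h)(k,l)` have first component the meet of
`{e, g • f, (g * h) • k}` and are equal. A pair `(e,g)` is idempotent iff
`g = 1`, which makes idempotents commute (their product is `(e ∧ f, 1)`) and gives E-unitarity
because the group component of a product is the product of the group components. -/

variable {G X : Type*}

section Meets

variable {α : Type*} [PartialOrder α]

theorem isGLB_pair_of_le {a b : α} (h : a ≤ b) : IsGLB {a, b} a :=
  IsLeast.isGLB ⟨Set.mem_insert a {b}, by simp [h]⟩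

theorem IsGLB.isGLB_insert_iff {s t : Set α} {x w : α} (h : IsGLB s x) :
    IsGLB (insert x t) w ↔ IsGLB (s ∪ t) w := by
  simp only [IsGLB, lowerBounds_insert, lowerBounds_union, h.lowerBounds_eq]

end Meets

theorem IsGLB.smul [Group G] [Preorder X] [MulAction G X] {g : G}
    (hg : ∀ x y : X, x ≤ y ↔ g • x ≤ g • y) {s : Set X} {a : X} (h : IsGLB s a) :
    IsGLB ((g • ·) '' s) (g • a) :=
  let e : X ≃o X := { MulAction.toPerm g with map_rel_iff' := (hg _ _).symm }
  e.isGLB_image'.2 h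

section McAlister

variable [Group G] [MulAction G X]

def invP (p : X × G) : X × G := (p.2⁻¹ • p.1, p.2⁻¹)

theorem invP_invP (p : X × G) : invP (invP p) = p := by
  simp [invP]

theorem MemP.inv {Y : Set X} {p : X × G} (hp : MemP Y p) : MemP Y (invP p) :=
  ⟨hp.2, by simpa [invP] using hp.1⟩

variable [PartialOrder X]

/-- `m` is the multiplication `(e,g)(f,h) = (e ∧ g • f, g * h)` of `P(G,X,Y)`; it is unconstrained
outside `P(G,X,Y)`. -/
def IsMcAlisterMul (Y : Set X) (m : X × G → X × G → X × G) : Prop :=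
  ∀ p q : X × G, MemP Y p → MemP Y q → IsGLB {p.1, p.2 • q.1} (m p q).1 ∧ (m p q).2 = p.2 * q.2

variable {Y : Set X}

namespace IsMcAlisterMul

variable {m : X × G → X × G → X × G} {p q t : X × G}

theorem memP (hm : IsMcAlisterMul Y m) (hact : ∀ (g : G) (x y : X), x ≤ y ↔ g • x ≤ g • y)
    (hY : IsLowerSet Y) (hp : MemP Y p) (hq : MemP Y q) : MemP Y (m p q) := by
  obtain ⟨hglb, hsnd⟩ := hm p q hp hq
  refine ⟨hY (hglb.1 (by simp)) hp.1, hY ?_ hq.2⟩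
  calc (m p q).2⁻¹ • (m p q).1 ≤ (p.2 * q.2)⁻¹ • (p.2 • q.1) := by
        rw [hsnd, ← hact]; exact hglb.1 (by simp)
    _ = q.2⁻¹ • q.1 := by rw [mul_inv_rev, mul_smul, inv_smul_smul]

theorem mul_eq_of_le (hm : IsMcAlisterMul Y m) (hp : MemP Y p) (hq : MemP Y q)
    (h : p.1 ≤ p.2 • q.1) : m p q = (p.1, p.2 * q.2) :=
  Prod.ext ((hm p q hp hq).1.unique (isGLB_pair_of_le h)) (hm p q hp hq).2

theorem mul_assoc (hm : IsMcAlisterMul Y m) (hact : ∀ (g : G) (x y : X), x ≤ y ↔ g • x ≤ g • y)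
    (hY : IsLowerSet Y) (hp : MemP Y p) (hq : MemP Y q) (ht : MemP Y t) :
    m (m p q) t = m p (m q t) := by
  obtain ⟨hpq, hpq_snd⟩ := hm p q hp hq
  obtain ⟨hqt, hqt_snd⟩ := hm q t hq ht
  obtain ⟨hpq_t, hpq_t_snd⟩ := hm _ t (hm.memP hact hY hp hq) ht
  obtain ⟨hp_qt, hp_qt_snd⟩ := hm p _ hp (hm.memP hact hY hq ht)
  rw [hpq_snd, mul_smul] at hpq_t
  rw [Set.pair_comm] at hp_qt
  have hleft := hpq.isGLB_insert_iff.1 hpq_t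
  have hright := (hqt.smul (hact p.2)).isGLB_insert_iff.1 hp_qt
  rw [Set.image_pair] at hright
  have hsets : ({p.1, p.2 • q.1} ∪ {p.2 • q.2 • t.1} : Set X)
      = {p.2 • q.1, p.2 • q.2 • t.1} ∪ {p.1} := by
    ext; simp only [Set.mem_union, Set.mem_insert_iff, Set.mem_singleton_iff]; tauto
  rw [hsets] at hleft
  refine Prod.ext (hleft.unique hright) ?_
  rw [hpq_t_snd, hp_qt_snd, hpq_snd, hqt_snd, _root_.mul_assoc]

theorem mul_invP_mul (hm : IsMcAlisterMul Y m) (hp : MemP Y p) : m (m p (invP p)) p = p := by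
  have hpp : m p (invP p) = (p.1, 1) := by
    rw [hm.mul_eq_of_le hp hp.inv (by simp [invP]), invP, mul_inv_cancel]
  rw [hpp, hm.mul_eq_of_le (p := (p.1, 1)) ⟨hp.1, by simpa using hp.1⟩ hp (by simp), one_mul]

theorem invP_mul_invP (hm : IsMcAlisterMul Y m) (hp : MemP Y p) :
    m (m (invP p) p) (invP p) = invP p := by
  simpa only [invP_invP] using hm.mul_invP_mul hp.inv

theorem mul_self_eq_self_iff (hm : IsMcAlisterMul Y m) (hp : MemP Y p) : m p p = p ↔ p.2 = 1 := by
  constructor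
  · intro h
    have hsnd : p.2 * p.2 = p.2 := by rw [← (hm p p hp hp).2, h]
    exact mul_eq_right.mp hsnd
  · intro h
    rw [hm.mul_eq_of_le hp hp (by simp [h]), h, one_mul]
    exact Prod.ext rfl h.symm

theorem mul_comm_of_snd_eq_one (hm : IsMcAlisterMul Y m) (hp : MemP Y p) (hq : MemP Y q)
    (hp1 : p.2 = 1) (hq1 : q.2 = 1) : m p q = m q p := by
  obtain ⟨hpq, hpq_snd⟩ := hm p q hp hq
  obtain ⟨hqp, hqp_snd⟩ := hm q p hq hp
  rw [hp1, one_smul] at hpq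
  rw [hq1, one_smul, Set.pair_comm] at hqp
  exact Prod.ext (hpq.unique hqp) (by rw [hpq_snd, hqp_snd, hp1, hq1])

theorem snd_eq_one_of_snd_mul_eq_one (hm : IsMcAlisterMul Y m) (hp : MemP Y p) (hq : MemP Y q)
    (hq1 : q.2 = 1) (h : (m p q).2 = 1) : p.2 = 1 := by
  rwa [(hm p q hp hq).2, hq1, mul_one] at h

end IsMcAlisterMul

end McAlister

theorem stmt18_general [Group G] [PartialOrder X] [MulAction G X]
    (hact : ∀ (g : G) (x y : X), x ≤ y ↔ g • x ≤ g • y)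
    (Y : Set X)
    (hMT1a : ∀ x y : X, y ∈ Y → x ≤ y → x ∈ Y)
    (m : X × G → X × G → X × G)
    (hm : ∀ p q : X × G, MemP Y p → MemP Y q →
      IsGLB {p.1, p.2 • q.1} (m p q).1 ∧ (m p q).2 = p.2 * q.2) :
    -- closure under the multiplication
    (∀ p q : X × G, MemP Y p → MemP Y q → MemP Y (m p q)) ∧
    -- associativity
    (∀ p q t : X × G, MemP Y p → MemP Y q → MemP Y t →
      m (m p q) t = m p (m q t)) ∧
    -- the inverse of (e,g) is (g⁻¹ • e, g⁻¹)
    (∀ p : X × G, MemP Y p →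
      MemP Y (p.2⁻¹ • p.1, p.2⁻¹) ∧
      m (m p (p.2⁻¹ • p.1, p.2⁻¹)) p = p ∧
      m (m (p.2⁻¹ • p.1, p.2⁻¹) p) (p.2⁻¹ • p.1, p.2⁻¹) = (p.2⁻¹ • p.1, p.2⁻¹)) ∧
    -- idempotents commute
    (∀ p q : X × G, MemP Y p → MemP Y q → m p p = p → m q q = q →
      m p q = m q p) ∧
    -- the idempotents are exactly the pairs (e,1) with e ∈ Y
    (∀ p : X × G, MemP Y p → (m p p = p ↔ p.1 ∈ Y ∧ p.2 = 1)) ∧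
    -- E-unitary: anything above an idempotent (in the natural partial order) is idempotent
    (∀ p e f : X × G, MemP Y p → MemP Y e → MemP Y f →
      m e e = e → m f f = f → e = m p f → m p p = p) := by
  have hY : IsLowerSet Y := fun _ _ hle hy => hMT1a _ _ hy hle
  have hm : IsMcAlisterMul Y m := hm
  have hidem : ∀ {p}, MemP Y p → (m p p = p ↔ p.2 = 1) := hm.mul_self_eq_self_iff
  refine ⟨fun p q hp hq => hm.memP hact hY hp hq,
    fun p q t hp hq ht => hm.mul_assoc hact hY hp hq ht,
    fun p hp => ⟨hp.inv, hm.mul_invP_mul hp, hm.invP_mul_invP hp⟩,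
    fun p q hp hq hpp hqq => hm.mul_comm_of_snd_eq_one hp hq ((hidem hp).1 hpp) ((hidem hq).1 hqq),
    fun p hp => (hidem hp).trans ⟨fun h => ⟨hp.1, h⟩, And.right⟩,
    fun p e f hp he hf hee hff hemf => (hidem hp).2 ?_⟩
  refine hm.snd_eq_one_of_snd_mul_eq_one hp hf ((hidem hf).1 hff) ?_
  rw [← hemf]
  exact (hidem he).1 hee

theorem stmt18 [Group G] [PartialOrder X] [MulAction G X]
    (hact : ∀ (g : G) (x y : X), x ≤ y ↔ g • x ≤ g • y)
    (Y : Set X)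
    (hMT1a : ∀ x y : X, y ∈ Y → x ≤ y → x ∈ Y)
    (hMT1b : ∀ a ∈ Y, ∀ b ∈ Y, ∃ m ∈ Y, m ≤ a ∧ m ≤ b ∧
        ∀ c ∈ Y, c ≤ a → c ≤ b → c ≤ m)
    (hMT2 : ∀ x : X, ∃ (g : G) (y : X), y ∈ Y ∧ x = g • y)
    (hMT3 : ∀ g : G, ∃ y ∈ Y, g • y ∈ Y)
    (m : X × G → X × G → X × G)
    (hm : ∀ p q : X × G, MemP Y p → MemP Y q →
      IsGLB {p.1, p.2 • q.1} (m p q).1 ∧ (m p q).2 = p.2 * q.2) :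
    -- closure under the multiplication
    (∀ p q : X × G, MemP Y p → MemP Y q → MemP Y (m p q)) ∧
    -- associativity
    (∀ p q t : X × G, MemP Y p → MemP Y q → MemP Y t →
      m (m p q) t = m p (m q t)) ∧
    -- the inverse of (e,g) is (g⁻¹ • e, g⁻¹)
    (∀ p : X × G, MemP Y p →
      MemP Y (p.2⁻¹ • p.1, p.2⁻¹) ∧
      m (m p (p.2⁻¹ • p.1, p.2⁻¹)) p = p ∧
      m (m (p.2⁻¹ • p.1, p.2⁻¹) p) (p.2⁻¹ • p.1, p.2⁻¹) = (p.2⁻¹ • p.1, p.2⁻¹)) ∧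
    -- idempotents commute
    (∀ p q : X × G, MemP Y p → MemP Y q → m p p = p → m q q = q →
      m p q = m q p) ∧
    -- the idempotents are exactly the pairs (e,1) with e ∈ Y
    (∀ p : X × G, MemP Y p → (m p p = p ↔ p.1 ∈ Y ∧ p.2 = 1)) ∧
    -- E-unitary: anything above an idempotent (in the natural partial order) is idempotent
    (∀ p e f : X × G, MemP Y p → MemP Y e → MemP Y f →
      m e e = e → m f f = f → e = m p f → m p p = p) :=
  stmt18_general hact Y hMT1a m hm
end
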